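/- For every integer d ≥ 1, the roots of (m+1)^{d+1} − m^{d+1} and the roots of (m+1)^{d+2} − m^{d+2} all lie on the line Re(z) = −1/2 and interlace along that line. -/
import Mathlib

open Polynomial

noncomputable def tval (k n : ℕ) : ℝ := Real.tan (Real.pi * k / n - Real.pi / 2) / 2

lemma targ_mem {k n : ℕ} (h0 : 0 < k) (h1 : k < n) :
    Real.pi * k / n - Real.pi / 2 ∈ Set.Ioo (-(Real.pi / 2)) (Real.pi / 2) := by
  have hn : (0:ℝ) < n := by exact_mod_cast h0.trans h1
  have hpi := Real.pi_pos
  constructor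
  · have : (0:ℝ) < Real.pi * k / n := by
      have : (0:ℝ) < (k:ℝ) := by exact_mod_cast h0
      positivity
    linarith
  · have hkr : (k:ℝ) < n := by exact_mod_cast h1
    have : Real.pi * k / n < Real.pi := by
      rw [div_lt_iff₀ hn]
      nlinarith
    linarith

lemma tval_lt_tval {k n k' n' : ℕ} (h0 : 0 < k) (h1 : k < n) (h0' : 0 < k') (h1' : k' < n')
    (h : (k : ℝ) / n < (k' : ℝ) / n') : tval k n < tval k' n' := by
  have hm := targ_mem h0 h1
  have hm' := targ_mem h0' h1'
  have harg : Real.pi * k / n - Real.pi / 2 < Real.pi * k' / n' - Real.pi / 2 := by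
    have hpi := Real.pi_pos
    have : Real.pi * ((k:ℝ)/n) < Real.pi * ((k':ℝ)/n') := (mul_lt_mul_iff_right₀ hpi).mpr h
    rw [mul_div_assoc, mul_div_assoc]
    linarith
  have := Real.strictMonoOn_tan hm hm' harg
  unfold tval
  linarith

lemma tval_le_tval {k n k' n' : ℕ} (h0 : 0 < k) (h1 : k < n) (h0' : 0 < k') (h1' : k' < n')
    (h : (k : ℝ) / n ≤ (k' : ℝ) / n') : tval k n ≤ tval k' n' := by
  rcases eq_or_lt_of_le h with he | hlt
  · have : Real.pi * k / n = Real.pi * k' / n' := by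
      rw [mul_div_assoc, mul_div_assoc, he]
    unfold tval
    rw [this]
  · exact (tval_lt_tval h0 h1 h0' h1' hlt).le

lemma pow_eq_pow {k n : ℕ} (h0 : 0 < k) (h1 : k < n) :
    ((-1/2 : ℂ) + (tval k n : ℂ) * Complex.I + 1) ^ n
      = ((-1/2 : ℂ) + (tval k n : ℂ) * Complex.I) ^ n := by
  set φ : ℝ := Real.pi * k / n - Real.pi / 2 with hφ
  have hm := targ_mem h0 h1
  have hc : 0 < Real.cos φ := Real.cos_pos_of_mem_Ioo hm
  have hcC : ((Real.cos φ : ℂ)) ≠ 0 := by exact_mod_cast hc.ne'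
  have hn : (0:ℝ) < n := by exact_mod_cast h0.trans h1
  have hnC : ((n:ℂ)) ≠ 0 := by exact_mod_cast hn.ne'
  have htan : ((tval k n : ℝ) : ℂ) = (Real.sin φ : ℂ) / (Real.cos φ : ℂ) / 2 := by
    rw [tval, Real.tan_eq_sin_div_cos, Complex.ofReal_div, Complex.ofReal_div,
      Complex.ofReal_ofNat]
  have hexp1 : Complex.exp ((φ:ℂ) * Complex.I) = (Real.cos φ : ℂ) + (Real.sin φ : ℂ) * Complex.I := by
    rw [Complex.exp_mul_I, ← Complex.ofReal_cos, ← Complex.ofReal_sin]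
  have hexp2 : Complex.exp (-(φ:ℂ) * Complex.I) = (Real.cos φ : ℂ) - (Real.sin φ : ℂ) * Complex.I := by
    rw [Complex.exp_mul_I, Complex.cos_neg, Complex.sin_neg, ← Complex.ofReal_cos,
      ← Complex.ofReal_sin]
    ring
  have aux1 : ∀ s c t : ℂ, c ≠ 0 → t = s / c / 2 →
      (-1/2 : ℂ) + t * Complex.I + 1 = (c + s * Complex.I) / (2 * c) := by
    intro s c t hcne ht
    subst ht
    field_simp
    ring
  have aux2 : ∀ s c t : ℂ, c ≠ 0 → t = s / c / 2 →
      (-1/2 : ℂ) + t * Complex.I = -(c - s * Complex.I) / (2 * c) := by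
    intro s c t hcne ht
    subst ht
    field_simp
    ring
  have h1' : (-1/2 : ℂ) + (tval k n : ℂ) * Complex.I + 1
      = Complex.exp ((φ:ℂ) * Complex.I) / (2 * Real.cos φ) := by
    rw [hexp1]
    exact aux1 _ _ _ hcC htan
  have h2' : (-1/2 : ℂ) + (tval k n : ℂ) * Complex.I
      = -Complex.exp (-(φ:ℂ) * Complex.I) / (2 * Real.cos φ) := by
    rw [hexp2]
    exact aux2 _ _ _ hcC htan
  rw [h1', h2', div_pow, div_pow]
  congr 1
  have hne : Complex.exp ((n:ℂ) * φ * Complex.I) ≠ 0 := Complex.exp_ne_zero _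
  have key : Complex.exp ((n:ℂ) * φ * Complex.I) * Complex.exp ((n:ℂ) * φ * Complex.I)
      = (-1) ^ n := by
    rw [← Complex.exp_add]
    have hnphi : (n:ℂ) * (φ:ℂ) = Real.pi * k - n * Real.pi / 2 := by
      rw [hφ]
      push_cast
      field_simp
    have harg : (n:ℂ) * φ * Complex.I + (n:ℂ) * φ * Complex.I
        = (k:ℂ) * (2 * Real.pi * Complex.I) + (-(n:ℂ)) * (Real.pi * Complex.I) := by
      have h4 : (n:ℂ) * φ * Complex.I = ((n:ℂ) * (φ:ℂ)) * Complex.I := by ring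
      rw [h4, hnphi]
      ring
    rw [harg, Complex.exp_add]
    have e1 : Complex.exp ((k:ℂ) * (2 * Real.pi * Complex.I)) = 1 := by
      rw [Complex.exp_nat_mul, Complex.exp_two_pi_mul_I, one_pow]
    have e2 : Complex.exp ((-(n:ℂ)) * (Real.pi * Complex.I)) = (-1)^n := by
      have hpin : Complex.exp ((n:ℂ) * (Real.pi * Complex.I)) = (-1)^n := by
        rw [Complex.exp_nat_mul, Complex.exp_pi_mul_I]
      have hz : (-(n:ℂ)) * (Real.pi * Complex.I) + (n:ℂ) * (Real.pi * Complex.I) = 0 := by ring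
      have h3 : Complex.exp ((-(n:ℂ)) * (Real.pi * Complex.I))
          * Complex.exp ((n:ℂ) * (Real.pi * Complex.I)) = 1 := by
        rw [← Complex.exp_add, hz, Complex.exp_zero]
      rw [hpin] at h3
      rw [eq_inv_of_mul_eq_one_left h3, ← inv_pow, inv_neg, inv_one]
    rw [e1, e2, one_mul]
  have lhs : Complex.exp ((φ:ℂ) * Complex.I) ^ n = Complex.exp ((n:ℂ) * φ * Complex.I) := by
    rw [mul_assoc, Complex.exp_nat_mul]
  have rhs : (-Complex.exp (-(φ:ℂ) * Complex.I)) ^ n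
      = (-1)^n * Complex.exp (-((n:ℂ) * φ * Complex.I)) := by
    rw [neg_pow]
    congr 1
    rw [← Complex.exp_nat_mul]
    congr 1
    ring
  rw [lhs, rhs, Complex.exp_neg]
  field_simp
  linear_combination key

lemma poly_ne_zero (n : ℕ) : ((X + 1) ^ (n + 2) - X ^ (n + 2) : Polynomial ℂ) ≠ 0 := by
  intro h
  have := congrArg (Polynomial.eval 0) h
  simp at this

lemma natDegree_le_aux (n : ℕ) :
    ((X + 1) ^ (n + 2) - X ^ (n + 2) : Polynomial ℂ).natDegree ≤ n + 1 := by
  have hdx : ((X : Polynomial ℂ) ^ (n + 2)).degree = ((n + 2 : ℕ) : WithBot ℕ) := by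
    rw [degree_pow, degree_X]
    simp
  have hdeg : ((X + 1) ^ (n + 2) - X ^ (n + 2) : Polynomial ℂ).degree
      < ((n + 2 : ℕ) : WithBot ℕ) := by
    have h1 : ((X + 1) ^ (n + 2) : Polynomial ℂ).degree = ((X : Polynomial ℂ) ^ (n + 2)).degree := by
      rw [degree_pow, degree_pow]
      congr 1
      rw [show (X + 1 : Polynomial ℂ) = X + C 1 by simp, degree_X_add_C, degree_X]
    have h2 : ((X + 1) ^ (n + 2) : Polynomial ℂ) ≠ 0 := by
      apply pow_ne_zero
      intro h
      have := congrArg (Polynomial.eval 0) h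
      simp at this
    have h3 : ((X + 1) ^ (n + 2) : Polynomial ℂ).leadingCoeff
        = ((X : Polynomial ℂ) ^ (n + 2)).leadingCoeff := by
      have m1 : ((X + 1 : Polynomial ℂ) ^ (n + 2)).Monic := by
        rw [show (X + 1 : Polynomial ℂ) = X + C 1 by simp]
        exact (monic_X_add_C 1).pow _
      have m2 : ((X : Polynomial ℂ) ^ (n + 2)).Monic := (monic_X).pow _
      rw [m1.leadingCoeff, m2.leadingCoeff]
    have hlt := Polynomial.degree_sub_lt h1 h2 h3
    rw [h1, hdx] at hlt
    exact hlt
  have h := (natDegree_lt_iff_degree_lt (poly_ne_zero n)).mpr hdeg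
  omega

lemma roots_eq (n : ℕ) :
    ((X + 1) ^ (n + 2) - X ^ (n + 2) : Polynomial ℂ).roots
      = Multiset.map (fun i : Fin (n + 1) =>
          (-1/2 : ℂ) + ((tval (i + 1) (n + 2) : ℝ) : ℂ) * Complex.I) Finset.univ.val := by
  set p : Polynomial ℂ := (X + 1) ^ (n + 2) - X ^ (n + 2) with hp
  set f : Fin (n + 1) → ℂ := fun i =>
    (-1/2 : ℂ) + ((tval (i + 1) (n + 2) : ℝ) : ℂ) * Complex.I with hf
  have hinj : Function.Injective f := by
    intro i j hij
    by_contra hne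
    rcases lt_or_gt_of_ne (fun h : (i:ℕ) = (j:ℕ) => hne (Fin.ext h)) with h | h
    · have ht : tval (i + 1) (n + 2) < tval (j + 1) (n + 2) := by
        apply tval_lt_tval (by omega) (by omega) (by omega) (by omega)
        have h' : ((i:ℕ) + 1 : ℝ) < ((j:ℕ) + 1 : ℝ) := by exact_mod_cast Nat.add_lt_add_right h 1
        have hpos : (0:ℝ) < ((n:ℕ) + 2 : ℝ) := by positivity
        push_cast
        gcongr
      have := congrArg Complex.im hij
      simp [hf] at this
      linarith
    · have ht : tval (j + 1) (n + 2) < tval (i + 1) (n + 2) := by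
        apply tval_lt_tval (by omega) (by omega) (by omega) (by omega)
        have h' : ((j:ℕ) + 1 : ℝ) < ((i:ℕ) + 1 : ℝ) := by exact_mod_cast Nat.add_lt_add_right h 1
        have hpos : (0:ℝ) < ((n:ℕ) + 2 : ℝ) := by positivity
        push_cast
        gcongr
      have := congrArg Complex.im hij
      simp [hf] at this
      linarith
  have hroot : ∀ i : Fin (n + 1), p.IsRoot (f i) := by
    intro i
    have hk := pow_eq_pow (k := i + 1) (n := n + 2) (by omega) (by omega)
    simp only [Polynomial.IsRoot, hp, hf]
    simp only [eval_sub, eval_pow, eval_add, eval_X, eval_one]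
    rw [sub_eq_zero]
    exact hk
  have hM : (Multiset.map f Finset.univ.val).Nodup :=
    Multiset.Nodup.map hinj Finset.univ.nodup
  have hle : Multiset.map f Finset.univ.val ≤ p.roots := by
    rw [Multiset.le_iff_count]
    intro a
    by_cases ha : a ∈ Multiset.map f Finset.univ.val
    · have h1 : Multiset.count a (Multiset.map f Finset.univ.val) ≤ 1 :=
        Multiset.nodup_iff_count_le_one.mp hM a
      have h2 : 1 ≤ Multiset.count a p.roots := by
        rw [Polynomial.count_roots]
        obtain ⟨i, _, rfl⟩ := Multiset.mem_map.mp ha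
        exact (Polynomial.rootMultiplicity_pos (poly_ne_zero n)).mpr (hroot i)
      omega
    · rw [Multiset.count_eq_zero_of_notMem ha]
      omega
  have hcard : Multiset.card p.roots ≤ Multiset.card (Multiset.map f Finset.univ.val) := by
    rw [Multiset.card_map]
    have : Multiset.card (Finset.univ.val : Multiset (Fin (n+1))) = n + 1 := by
      simp
    rw [this]
    calc Multiset.card p.roots ≤ p.natDegree := Polynomial.card_roots' p
      _ ≤ n + 1 := natDegree_le_aux n
  exact (Multiset.eq_of_le_of_card_le hle hcard).symm

theorem dual_typeA_interlacing (d : ℕ) (hd : 1 ≤ d) :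
    ∃ (t : Fin (d + 1) → ℝ) (s : Fin d → ℝ),
      Monotone t ∧ Monotone s ∧
      ((Polynomial.X + 1) ^ (d + 2) - Polynomial.X ^ (d + 2) : Polynomial ℂ).roots
        = Multiset.map (fun i => (-1/2 : ℂ) + (t i : ℂ) * Complex.I) Finset.univ.val ∧
      ((Polynomial.X + 1) ^ (d + 1) - Polynomial.X ^ (d + 1) : Polynomial ℂ).roots
        = Multiset.map (fun i => (-1/2 : ℂ) + (s i : ℂ) * Complex.I) Finset.univ.val ∧
      ∀ i : Fin d, t i.castSucc ≤ s i ∧ s i ≤ t i.succ := by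
  obtain ⟨e, rfl⟩ : ∃ e, d = e + 1 := ⟨d - 1, by omega⟩
  refine ⟨fun i => tval (i + 1) (e + 3), fun i => tval (i + 1) (e + 2), ?_, ?_, ?_, ?_, ?_⟩
  · intro i j hij
    apply tval_le_tval (by omega) (by omega) (by omega) (by omega)
    have h' : ((i:ℕ) : ℝ) ≤ ((j:ℕ) : ℝ) := by exact_mod_cast hij
    have hpos : (0:ℝ) < ((e:ℕ) + 3 : ℝ) := by positivity
    push_cast
    gcongr
  · intro i j hij
    apply tval_le_tval (by omega) (by omega) (by omega) (by omega)
    have h' : ((i:ℕ) : ℝ) ≤ ((j:ℕ) : ℝ) := by exact_mod_cast hij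
    have hpos : (0:ℝ) < ((e:ℕ) + 2 : ℝ) := by positivity
    push_cast
    gcongr
  · exact roots_eq (e + 1)
  · exact roots_eq e
  · intro i
    have hi : (i : ℕ) ≤ e := by omega
    constructor
    · show tval ((i.castSucc : ℕ) + 1) (e + 3) ≤ tval ((i : ℕ) + 1) (e + 2)
      rw [show ((i.castSucc : ℕ)) = (i : ℕ) from rfl]
      apply tval_le_tval (by omega) (by omega) (by omega) (by omega)
      have hiR : (0:ℝ) ≤ ((i:ℕ) : ℝ) + 1 := by positivity
      push_cast
      gcongr
      · norm_num
    · show tval ((i : ℕ) + 1) (e + 2) ≤ tval ((i.succ : ℕ) + 1) (e + 3)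
      rw [show ((i.succ : ℕ)) = (i : ℕ) + 1 from rfl]
      apply tval_le_tval (by omega) (by omega) (by omega) (by omega)
      rw [div_le_div_iff₀ (by positivity) (by positivity)]
      have hiR : ((i:ℕ) : ℝ) ≤ (e : ℝ) := by exact_mod_cast hi
      push_cast
      nlinarith
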